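/- arXiv:math/0111047 — 2 statements merged into one kernel-verified Lean document; each statement's English description precedes it below -/
import Mathlib

section
/- With the same conventions, ∂³(:a^N:) = 3N ∂(:(∂²a) a^{N−1}:) − 2N :(∂³a) a^{N−1}: + 6·C(N,3)·:(∂a)³ a^{N−3}:. -/
/-!
Since `∂` is a derivation of a commutative ring, `∂³(aᴺ)` expands by the Leibniz rule into
`N aᴺ⁻¹ ∂³a + 3N(N-1) aᴺ⁻² ∂a ∂²a + N(N-1)(N-2) aᴺ⁻³ (∂a)³`. Expanding
`∂((∂²a) aᴺ⁻¹)` the same way gives the right-hand side, since `6·C(N,3) = N(N-1)(N-2)`.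
-/

namespace Derivation

variable {R A : Type*} [CommSemiring R] [CommSemiring A] [Algebra R A]
  (D : Derivation R A A) (a b : A) (n : ℕ)

theorem leibniz_mul_pow : D (b * a ^ n) = D b * a ^ n + n • (b * a ^ (n - 1) * D a) := by
  rw [leibniz, leibniz_pow, smul_eq_mul, smul_eq_mul, smul_eq_mul, mul_smul_comm, mul_assoc,
    add_comm, mul_comm (a ^ n)]

theorem leibniz_pow_iterate_two :
    D (D (a ^ n)) = n • (a ^ (n - 1) * D (D a)) + (n * (n - 1)) • (a ^ (n - 2) * D a ^ 2) := by
  rw [leibniz_pow, smul_eq_mul, map_nsmul, mul_comm, leibniz_mul_pow, Nat.sub_sub]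
  simp only [nsmul_eq_mul, Nat.cast_mul]
  ring

theorem leibniz_pow_iterate_three :
    D (D (D (a ^ n))) = n • (a ^ (n - 1) * D (D (D a)))
      + (3 * n * (n - 1)) • (a ^ (n - 2) * D a * D (D a))
      + (n * (n - 1) * (n - 2)) • (a ^ (n - 3) * D a ^ 3) := by
  rw [leibniz_pow_iterate_two, map_add, map_nsmul, map_nsmul, mul_comm (a ^ (n - 1)),
    leibniz_mul_pow, mul_comm (a ^ (n - 2)), leibniz_mul_pow, leibniz_pow, Nat.sub_sub,
    Nat.sub_sub]
  simp only [nsmul_eq_mul, Nat.cast_mul, Nat.cast_ofNat]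
  ring

end Derivation

theorem Nat.six_mul_choose_three (n : ℕ) : 6 * n.choose 3 = n * (n - 1) * (n - 2) := by
  rw [show 6 = (3).factorial from rfl, ← Nat.descFactorial_eq_factorial_mul_choose]
  simp [Nat.descFactorial_succ, Nat.mul_comm]

/-- Lemma 6.1(v): with factors inside normally ordered products commuting and the
Leibniz rule for `∂`, one has
`∂³(:aᴺ:) = 3N ∂(:(∂²a) a^{N−1}:) − 2N :(∂³a) a^{N−1}: + 6·C(N,3)·:(∂a)³ a^{N−3}:`. -/
theorem normal_order_third_derivative' (R : Type*) [CommRing R] (d : Derivation ℤ R R)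
    (a : R) (N : ℕ) :
    d (d (d (a ^ N))) = (3 * N) • d (d (d a) * a ^ (N - 1))
      - (2 * N) • (d (d (d a)) * a ^ (N - 1))
      + (6 * N.choose 3) • (d a ^ 3 * a ^ (N - 3)) := by
  rw [d.leibniz_pow_iterate_three, d.leibniz_mul_pow, Nat.six_mul_choose_three, Nat.sub_sub]
  simp only [nsmul_eq_mul, Nat.cast_mul, Nat.cast_ofNat]
  ring
end

section
/- Define Θ^{p,q}_{m,n} = ((pn−qm)(p+q−1)/24)·(2p+2q−2+3m+3n−(m+n)²) and Ω^{p,q}_{m,n} as in the paper. Then for all integers p,q,m,n with p+q ≠ 2, the quantity Θ^{p,q}_{m,n} + Ω^{p,q}_{m,n}/(12(p+q−2)) is antisymmetric under simultaneous exchange (p,m) ↔ (q,n). -/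
/-!
Θ and Ω are each antisymmetric under `(p,m) ↔ (q,n)`: in Θ only the factor `pn − qm` changes,
by a sign, and for Ω this is a polynomial identity. The denominator `12(p+q−2)` is symmetric,
so the sum is antisymmetric.
-/

/-- The structure polynomial `Ω^{p,q}_{m,n}` of the W algebra `𝒲_X`, as a rational
number. -/
def OmegaQ (p q m n : ℤ) : ℚ :=
  ((m*p^3*n^2 + 3*m*p^2*n^2*q - p^2*n*q + p^2*q*n^3 - 3*m*p^2*n^2 + p*n*q
    + 3*m^2*p*n*q - 3*m*p*n^2*q - m^3*q^2*p - p*q*n^3 - m*p*q + m^3*p*q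
    + m*p*q^2 + 2*m*p*n^2 - 3*m^2*p*n*q^2 - 2*m^2*n*q + 3*m^2*n*q^2 - m^2*n*q^3 : ℤ) : ℚ)

/-- `Θ^{p,q}_{m,n} = ((pn−qm)(p+q−1)/24)·(2p+2q−2+3m+3n−(m+n)²)`. -/
def ThetaQ (p q m n : ℤ) : ℚ :=
  (((p*n - q*m)*(p + q - 1) : ℤ) : ℚ) / 24 *
    (((2*p + 2*q - 2 + 3*m + 3*n - (m + n)^2 : ℤ) : ℚ))

theorem thetaQ_swap (p q m n : ℤ) : ThetaQ q p n m = -ThetaQ p q m n := by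
  unfold ThetaQ
  push_cast
  ring

theorem omegaQ_swap (p q m n : ℤ) : OmegaQ q p n m = -OmegaQ p q m n := by
  unfold OmegaQ
  push_cast
  ring

theorem theta_omega_antisymm_general (p q m n : ℤ) :
    ThetaQ q p n m + OmegaQ q p n m / (12 * (((q : ℚ) + (p : ℚ)) - 2))
      = -(ThetaQ p q m n + OmegaQ p q m n / (12 * (((p : ℚ) + (q : ℚ)) - 2))) := by
  rw [thetaQ_swap, omegaQ_swap, add_comm (q : ℚ), neg_div, neg_add]

/-- The coefficient `Θ^{p,q}_{m,n} + Ω^{p,q}_{m,n}/(12(p+q−2))` of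
`:a^{p+q−2}:_{m+n}(τ_*(eαβ))` in the commutator (equation (6.15)) is antisymmetric
under simultaneous exchange `(p,m) ↔ (q,n)`, for all integers `p,q,m,n` with `p+q ≠ 2`. -/
theorem theta_omega_antisymm (p q m n : ℤ) (h : p + q ≠ 2) :
    ThetaQ q p n m + OmegaQ q p n m / (12 * (((q : ℚ) + (p : ℚ)) - 2))
      = -(ThetaQ p q m n + OmegaQ p q m n / (12 * (((p : ℚ) + (q : ℚ)) - 2))) :=
  theta_omega_antisymm_general p q m n
end
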